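/- Let r ≥ 4 be an integer and let n be a positive multiple of r. Then rcr(K_n^r) ≥ rcr(K_r) · (n/r)⁴, where rcr denotes the rectilinear crossing number, K_r the complete graph on r vertices, and K_n^r the complete balanced r-partite graph. -/

import Mathlib

/-- A rectilinear drawing: an injective map of the vertices into the plane
with no three vertex images collinear. -/
def IsRectilinearDrawing {V : Type*} (f : V → ℝ × ℝ) : Prop :=
  Function.Injective f ∧
    ∀ a b c : V, a ≠ b → a ≠ c → b ≠ c →
      ¬ Collinear ℝ ({f a, f b, f c} : Set (ℝ × ℝ))

/-- The open straight-line segment joining the images of the endpoints of an edge. -/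
def edgeSeg {V : Type*} (f : V → ℝ × ℝ) : Sym2 V → Set (ℝ × ℝ) :=
  Sym2.lift ⟨fun a b => openSegment ℝ (f a) (f b), fun a b => openSegment_symm ℝ (f a) (f b)⟩

/-- Two edges (with disjoint vertex sets) cross if their open segments meet. -/
def EdgesCross {V : Type*} (f : V → ℝ × ℝ) (e₁ e₂ : Sym2 V) : Prop :=
  (∀ v, v ∈ e₁ → v ∉ e₂) ∧ (edgeSeg f e₁ ∩ edgeSeg f e₂).Nonempty

lemma edgesCross_symm {V : Type*} (f : V → ℝ × ℝ) : Symmetric (EdgesCross f) :=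
  fun _ _ h => ⟨fun v hv hv' => h.1 v hv' hv, by rw [Set.inter_comm]; exact h.2⟩

/-- The crossing number of a drawing: the number of unordered pairs of edges of `G`
that cross in the drawing. -/
noncomputable def crossingNumber {V : Type*} (G : SimpleGraph V) (f : V → ℝ × ℝ) : ℕ :=
  Set.ncard {p : Sym2 (Sym2 V) |
    (∀ e ∈ p, e ∈ G.edgeSet) ∧ p ∈ Sym2.fromRel ⟨edgesCross_symm f⟩}

/-- The rectilinear crossing number of a graph. -/
noncomputable def rcr {V : Type*} (G : SimpleGraph V) : ℕ :=
  sInf {k | ∃ f : V → ℝ × ℝ, IsRectilinearDrawing f ∧ crossingNumber G f = k}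

/-- The complete balanced `r`-partite graph with `r` parts of size `m`. -/
def completeBalanced (r m : ℕ) : SimpleGraph (Fin r × Fin m) :=
  SimpleGraph.comap Prod.fst ⊤

instance (r m : ℕ) : DecidableRel (completeBalanced r m).Adj :=
  fun u v => inferInstanceAs (Decidable (u.1 ≠ v.1))

/-- The balanced layered graph with `r` layers of size `m`: all edges between
consecutive layers. -/
def layeredGraph (r m : ℕ) : SimpleGraph (Fin r × Fin m) where
  Adj u v := u.1.1 + 1 = v.1.1 ∨ v.1.1 + 1 = u.1.1
  symm := ⟨fun _ _ h => h.symm⟩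
  loopless := ⟨fun u h => by cases h <;> omega⟩

instance (r m : ℕ) : DecidableRel (layeredGraph r m).Adj :=
  fun u v => inferInstanceAs (Decidable (u.1.1 + 1 = v.1.1 ∨ v.1.1 + 1 = u.1.1))

/-- The `s`-fold blow-up of a graph `G`. -/
def blowup {V : Type*} (G : SimpleGraph V) (s : ℕ) : SimpleGraph (V × Fin s) :=
  SimpleGraph.comap Prod.fst G

/-!
Choosing one vertex `t v` in every part of the blow-up `G[k]` gives a copy of `G`, drawn with at
least `rcr G` crossings, all of which are crossings of the drawing of `G[k]`. There are
`k ^ |V|` such transversals `t`, while a crossing of `G[k]` has four distinct endpoints, which a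
transversal must pass through, so it is counted by at most `k ^ (|V| - 4)` of them. Double
counting gives `k ^ |V| * rcr G ≤ cr * k ^ (|V| - 4)` for every drawing of `G[k]`.
-/

open Finset Function

section Drawings

variable {V W : Type*}

lemma not_collinear_parabola {a b c : ℝ} (hab : a ≠ b) (hac : a ≠ c) (hbc : b ≠ c) :
    ¬ Collinear ℝ ({(a, a ^ 2), (b, b ^ 2), (c, c ^ 2)} : Set (ℝ × ℝ)) := by
  rw [collinear_iff_of_mem (Set.mem_insert _ _)]
  rintro ⟨v, hv⟩
  obtain ⟨s, hs⟩ := hv (b, b ^ 2) (by simp)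
  obtain ⟨u, hu⟩ := hv (c, c ^ 2) (by simp)
  obtain ⟨hb₁, hb₂⟩ := Prod.ext_iff.1 hs
  obtain ⟨hc₁, hc₂⟩ := Prod.ext_iff.1 hu
  simp only [vadd_eq_add, Prod.fst_add, Prod.snd_add, Prod.smul_fst, Prod.smul_snd,
    smul_eq_mul] at hb₁ hb₂ hc₁ hc₂
  -- `(b - a)(c - a)(c - b)` is the cross product of the chords `(b - a, b² - a²)` and
  -- `(c - a, c² - a²)`, both multiples of `v`
  have : (b - a) * ((c - a) * (c - b)) = 0 := by
    linear_combination (c ^ 2 - a ^ 2) * hb₁ + s * v.1 * hc₂ - (b ^ 2 - a ^ 2) * hc₁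
      - u * v.1 * hb₂
  simp only [mul_eq_zero, sub_eq_zero] at this
  rcases this with h | h | h
  exacts [hab h.symm, hac h.symm, hbc h.symm]

lemma IsRectilinearDrawing.comp {f : W → ℝ × ℝ} (hf : IsRectilinearDrawing f) {g : V → W}
    (hg : Injective g) : IsRectilinearDrawing (f ∘ g) :=
  ⟨hf.1.comp hg, fun _ _ _ hab hac hbc => hf.2 _ _ _ (hg.ne hab) (hg.ne hac) (hg.ne hbc)⟩

lemma isRectilinearDrawing_parabola {g : V → ℝ} (hg : Injective g) :
    IsRectilinearDrawing fun v => (g v, g v ^ 2) :=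
  ⟨fun _ _ h => hg (congrArg Prod.fst h), fun _ _ _ hab hac hbc =>
    not_collinear_parabola (hg.ne hab) (hg.ne hac) (hg.ne hbc)⟩

lemma exists_isRectilinearDrawing (V : Type*) [Countable V] :
    ∃ f : V → ℝ × ℝ, IsRectilinearDrawing f := by
  obtain ⟨g, hg⟩ := Countable.exists_injective_nat V
  exact ⟨_, isRectilinearDrawing_parabola (Nat.cast_injective.comp hg)⟩

lemma rcr_le_crossingNumber {G : SimpleGraph V} {f : V → ℝ × ℝ}
    (hf : IsRectilinearDrawing f) :
    rcr G ≤ crossingNumber G f :=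
  Nat.sInf_le ⟨f, hf, rfl⟩

def crossingPairs (G : SimpleGraph V) (f : V → ℝ × ℝ) : Set (Sym2 (Sym2 V)) :=
  {p | (∀ e ∈ p, e ∈ G.edgeSet) ∧ p ∈ Sym2.fromRel ⟨edgesCross_symm f⟩}

lemma edgeSeg_map (f : W → ℝ × ℝ) (g : V → W) (e : Sym2 V) :
    edgeSeg f (e.map g) = edgeSeg (f ∘ g) e := by
  induction e using Sym2.inductionOn with
  | hf x y => rfl

lemma EdgesCross.map {f : W → ℝ × ℝ} {g : V → W} (hg : Injective g) {e₁ e₂ : Sym2 V}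
    (h : EdgesCross (f ∘ g) e₁ e₂) : EdgesCross f (e₁.map g) (e₂.map g) := by
  refine ⟨?_, by rw [edgeSeg_map, edgeSeg_map]; exact h.2⟩
  simp only [Sym2.mem_map]
  rintro _ ⟨a, ha, rfl⟩ ⟨b, hb, hab⟩
  exact h.1 a ha (hg hab ▸ hb)

lemma mapsTo_crossingPairs_comap {G : SimpleGraph W} {f : W → ℝ × ℝ} {g : V → W}
    (hg : Injective g) :
    Set.MapsTo (Sym2.map (Sym2.map g)) (crossingPairs (G.comap g) (f ∘ g))
      (crossingPairs G f) := by
  rintro p ⟨hedge, hcross⟩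
  refine ⟨?_, ?_⟩
  · simp only [Sym2.mem_map]
    rintro _ ⟨e, he, rfl⟩
    exact (SimpleGraph.Hom.comap g G).map_mem_edgeSet (hedge e he)
  · induction p using Sym2.inductionOn with
    | hf e₁ e₂ =>
      rw [Sym2.fromRel_prop] at hcross
      rw [Sym2.map_mk, Sym2.fromRel_prop]
      exact hcross.map hg

end Drawings

lemma card_filter_forall_mem_eq_mul_pow_card {V β : Type*} [Fintype V] [DecidableEq V]
    [Fintype β] [DecidableEq β] (s : Finset V) (g : V → β) :
    #{t : V → β | ∀ i ∈ s, t i = g i} * Fintype.card β ^ #s =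
      Fintype.card β ^ Fintype.card V := by
  have hpi : ({t : V → β | ∀ i ∈ s, t i = g i} : Finset _) =
      Fintype.piFinset fun i => if i ∈ s then {g i} else univ := by
    ext t
    simp only [mem_filter, mem_univ, true_and, Fintype.mem_piFinset]
    refine forall_congr' fun i => ?_
    split_ifs <;> simp [*]
  rw [hpi, Fintype.card_piFinset]
  simp only [apply_ite card, card_singleton, card_univ]
  rw [prod_ite, prod_const_one, one_mul, prod_const, ← pow_add, filter_not, card_sdiff]
  simp [Nat.sub_add_cancel (card_le_univ s)]

section Blowup

variable {V : Type*} {k : ℕ}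

def OnGraph (t : V → Fin k) (p : Sym2 (Sym2 (V × Fin k))) : Prop :=
  ∀ e ∈ p, ∀ a ∈ e, t a.1 = a.2

lemma rcr_le_ncard_crossingPairs_onGraph [Finite V] {G : SimpleGraph V}
    {f : V × Fin k → ℝ × ℝ} (hf : IsRectilinearDrawing f) (t : V → Fin k) :
    rcr G ≤ {p ∈ crossingPairs (blowup G k) f | OnGraph t p}.ncard := by
  set σ : V → V × Fin k := fun v => (v, t v)
  have hσ : Injective σ := fun a b h => congrArg Prod.fst h
  calc rcr G ≤ crossingNumber G (f ∘ σ) := rcr_le_crossingNumber (hf.comp hσ)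
    _ = (Sym2.map (Sym2.map σ) '' crossingPairs G (f ∘ σ)).ncard :=
      (Set.ncard_image_of_injective _ (Sym2.map.injective (Sym2.map.injective hσ))).symm
    _ ≤ _ := Set.ncard_le_ncard ?_ (Set.toFinite _)
  rintro _ ⟨p, hp, rfl⟩
  refine ⟨mapsTo_crossingPairs_comap (G := blowup G k) hσ hp, ?_⟩
  intro e he a ha
  obtain ⟨e, -, rfl⟩ := Sym2.mem_map.1 he
  obtain ⟨v, -, rfl⟩ := Sym2.mem_map.1 ha
  rfl

open Classical in
lemma card_onGraph_mul_pow_four_le [Fintype V] {H : SimpleGraph (V × Fin k)}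
    {f : V × Fin k → ℝ × ℝ} {p : Sym2 (Sym2 (V × Fin k))} (hp : p ∈ crossingPairs H f) :
    #{t : V → Fin k | OnGraph t p} * k ^ 4 ≤ k ^ Fintype.card V := by
  by_cases h : ∃ t₀, OnGraph t₀ p
  swap
  · push Not at h
    simp [filter_false_of_mem fun t _ => h t]
  obtain ⟨t₀, ht₀⟩ := h
  obtain ⟨hedge, hcross⟩ := hp
  induction p using Sym2.inductionOn with | hf e₁ e₂ => ?_
  induction e₁ using Sym2.inductionOn with | hf x y => ?_
  induction e₂ using Sym2.inductionOn with | hf z w => ?_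
  have hon : ∀ t : V → Fin k, OnGraph t s(s(x, y), s(z, w)) ↔
      t x.1 = x.2 ∧ t y.1 = y.2 ∧ t z.1 = z.2 ∧ t w.1 = w.2 := by
    intro t
    simp only [OnGraph, Sym2.mem_iff, forall_eq_or_imp, forall_eq, and_assoc]
  obtain ⟨hx, hy, hz, hw⟩ := (hon t₀).1 ht₀
  have hfst : ∀ a b : V × Fin k, t₀ a.1 = a.2 → t₀ b.1 = b.2 → a ≠ b → a.1 ≠ b.1 :=
    fun a b ha hb hab h => hab (Prod.ext h (by rw [← ha, ← hb, h]))
  have hxy : x ≠ y := H.ne_of_adj (hedge _ (Sym2.mem_mk_left _ _))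
  have hzw : z ≠ w := H.ne_of_adj (hedge _ (Sym2.mem_mk_right _ _))
  rw [Sym2.fromRel_prop] at hcross
  have hdisj := hcross.1
  simp only [Sym2.mem_iff, forall_eq_or_imp, forall_eq, not_or] at hdisj
  set s : Finset V := {x.1, y.1, z.1, w.1}
  have hs : #s = 4 := by
    rw [card_insert_of_notMem, card_insert_of_notMem, card_pair] <;> simp [*]
  refine le_of_eq ?_
  calc #{t : V → Fin k | OnGraph t s(s(x, y), s(z, w))} * k ^ 4
      = #{t : V → Fin k | ∀ i ∈ s, t i = t₀ i} * k ^ #s := by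
        rw [hs]; congr 2; ext t; simp [hon, s, hx, hy, hz, hw]
    _ = k ^ Fintype.card V := by simpa using card_filter_forall_mem_eq_mul_pow_card s t₀

theorem rcr_mul_pow_four_le_rcr_blowup [Fintype V] (G : SimpleGraph V) (k : ℕ) :
    rcr G * k ^ 4 ≤ rcr (blowup G k) := by
  classical
  rcases k.eq_zero_or_pos with rfl | hk
  · simp
  obtain ⟨f₀, hf₀⟩ := exists_isRectilinearDrawing (V × Fin k)
  refine le_csInf ⟨_, f₀, hf₀, rfl⟩ ?_
  rintro _ ⟨f, hf, rfl⟩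
  set C := (crossingPairs (blowup G k) f).toFinset
  have lower :
      k ^ Fintype.card V * rcr G ≤ ∑ t : V → Fin k, #(C.bipartiteAbove OnGraph t) := by
    have := card_nsmul_le_sum univ (fun t => #(C.bipartiteAbove OnGraph t)) (rcr G) fun t _ => by
      simpa [C, bipartiteAbove, ← Set.ncard_coe_finset] using
        rcr_le_ncard_crossingPairs_onGraph (G := G) hf t
    simpa using this
  have upper :
      (∑ p ∈ C, #(univ.bipartiteBelow OnGraph p)) * k ^ 4 ≤ #C * k ^ Fintype.card V := by
    rw [sum_mul, ← smul_eq_mul, ← sum_const]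
    exact sum_le_sum fun p hp => card_onGraph_mul_pow_four_le (Set.mem_toFinset.1 hp)
  rw [sum_card_bipartiteAbove_eq_sum_card_bipartiteBelow] at lower
  have hC : crossingNumber (blowup G k) f = #C := by
    rw [← Set.ncard_coe_finset, Set.coe_toFinset]; rfl
  refine Nat.le_of_mul_le_mul_right ?_ (pow_pos hk (Fintype.card V))
  calc rcr G * k ^ 4 * k ^ Fintype.card V
      ≤ (∑ p ∈ C, #(univ.bipartiteBelow OnGraph p)) * k ^ 4 := by
        rw [mul_right_comm, mul_comm (rcr G)]; exact Nat.mul_le_mul_right _ lower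
    _ ≤ _ := by rw [hC]; exact upper

end Blowup

theorem stmt7_general (r k : ℕ) :
    rcr (⊤ : SimpleGraph (Fin r)) * k ^ 4 ≤ rcr (completeBalanced r k) :=
  rcr_mul_pow_four_le_rcr_blowup ⊤ k

/-- `rcr(K_n^r) ≥ rcr(K_r)·(n/r)⁴` (here `n = r·k`, `k = n/r`). -/
theorem stmt7 (r k n : ℕ) (hr : 4 ≤ r) (hk : 1 ≤ k) (hn : n = r * k) :
    rcr (⊤ : SimpleGraph (Fin r)) * k ^ 4 ≤ rcr (completeBalanced r k) :=
  stmt7_general r k
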